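/- For every real α > 0, with τ_α = 2(α + 1/α) and t_α = 4α + 2/α, and for every real t: Σ_{m∈ℤ} e^{-πτ_α m²} ϑ₃(i π τ_α m, i t_α) e^{2πimt} = ϑ₃(πt, 2iα) · ϑ₃(πt, iτ_α). -/

import Mathlib

/-!
Expanding ϑ₃(iπam, i(a+b)) and completing the square, the `(m, k)` term of the double series is
`e^{-πa(m+k)²} e^{2i(m+k)z} · e^{-πbk²} e^{-2ikz}`. By absolute convergence the shear
`(m, k) ↦ (m + k, k)` turns the double series into `ϑ₃(z, ia) · ϑ₃(-z, ib)`, and ϑ₃ is even in `z`.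
The theorem is the case `a = τ_α`, `b = 2α`, `z = πt`, for which `a + b = t_α`.
-/

/-- Jacobi theta function ϑ₃(z, ix) = Σ_{k∈ℤ} e^{-πxk²} e^{2ikz}. -/
noncomputable def theta3 (z : ℂ) (x : ℝ) : ℂ :=
  ∑' k : ℤ, Complex.exp (-Real.pi * x * (k : ℂ) ^ 2) * Complex.exp (2 * Complex.I * (k : ℂ) * z)

open Complex Real

theorem tsum_tsum_mul_add_eq_tsum_mul_tsum {G R : Type*} [AddGroup G] [NormedRing R]
    [CompleteSpace R] {f g : G → R} (hf : Summable (‖f ·‖)) (hg : Summable (‖g ·‖)) :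
    ∑' m, ∑' k, f (m + k) * g k = (∑' n, f n) * ∑' k, g k := by
  let shear : G × G ≃ G × G :=
    ⟨fun p => (p.1 + p.2, p.2), fun p => (p.1 - p.2, p.2), fun p => by simp, fun p => by simp⟩
  have hprod : Summable fun p : G × G => f p.1 * g p.2 := summable_mul_of_summable_norm hf hg
  have hshear : Summable fun p : G × G => f (p.1 + p.2) * g p.2 := shear.summable_iff.mpr hprod
  rw [tsum_mul_tsum_of_summable_norm hf hg, ← shear.tsum_eq (fun p => f p.1 * g p.2)]
  exact hshear.tsum_prod.symm

lemma theta3_term_eq_jacobiTheta₂_term (z : ℂ) (x : ℝ) (k : ℤ) :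
    cexp (-π * x * k ^ 2) * cexp (2 * I * k * z) = jacobiTheta₂_term k (z / π) (I * x) := by
  rw [jacobiTheta₂_term, ← Complex.exp_add]
  congr 1
  field_simp
  linear_combination (-π * x * k ^ 2) * I_sq

lemma theta3_eq_jacobiTheta₂ (z : ℂ) (x : ℝ) : theta3 z x = jacobiTheta₂ (z / π) (I * x) :=
  tsum_congr fun k => theta3_term_eq_jacobiTheta₂_term z x k

lemma theta3_neg_left (z : ℂ) (x : ℝ) : theta3 (-z) x = theta3 z x := by
  rw [theta3_eq_jacobiTheta₂, theta3_eq_jacobiTheta₂, neg_div, jacobiTheta₂_neg_left]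

lemma summable_norm_theta3_term (z : ℂ) {x : ℝ} (hx : 0 < x) :
    Summable fun k : ℤ => ‖cexp (-π * x * k ^ 2) * cexp (2 * I * k * z)‖ := by
  simp_rw [theta3_term_eq_jacobiTheta₂_term]
  exact summable_norm_iff.mpr ((summable_jacobiTheta₂_term_iff _ _).mpr (by simpa using hx))

lemma gaussian_mul_theta3_term_mul_cexp (a b : ℝ) (z : ℂ) (m k : ℤ) :
    (rexp (-π * a * m ^ 2) : ℂ) *
        (cexp (-π * (a + b : ℝ) * k ^ 2) * cexp (2 * I * k * (I * π * a * m))) *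
        cexp (2 * I * m * z) =
      (cexp (-π * a * (m + k : ℤ) ^ 2) * cexp (2 * I * (m + k : ℤ) * z)) *
        (cexp (-π * b * k ^ 2) * cexp (2 * I * k * (-z))) := by
  simp only [ofReal_exp, ← Complex.exp_add]
  congr 1
  push_cast
  linear_combination (2 * π * a * m * k) * I_sq

theorem theta3_mul_theta3 {a b : ℝ} (ha : 0 < a) (hb : 0 < b) (z : ℂ) :
    theta3 z a * theta3 z b =
      ∑' m : ℤ, (rexp (-π * a * m ^ 2) : ℂ) * theta3 (I * π * a * m) (a + b) *
        cexp (2 * I * m * z) := by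
  rw [← theta3_neg_left z b, theta3, theta3, ← tsum_tsum_mul_add_eq_tsum_mul_tsum
    (summable_norm_theta3_term z ha) (summable_norm_theta3_term (-z) hb)]
  refine tsum_congr fun m => ?_
  rw [theta3, ← tsum_mul_left, ← tsum_mul_right]
  exact tsum_congr fun k => (gaussian_mul_theta3_term_mul_cexp a b z m k).symm

theorem theta3_sum_identity (α : ℝ) (hα : 0 < α) (t : ℝ) :
    ∑' m : ℤ, (Real.exp (-Real.pi * (2 * (α + 1 / α)) * (m : ℝ) ^ 2) : ℂ) *
        theta3 (Complex.I * Real.pi * (2 * (α + 1 / α)) * (m : ℂ)) (4 * α + 2 / α) *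
        Complex.exp (2 * Real.pi * Complex.I * (m : ℂ) * t)
      = theta3 (Real.pi * t) (2 * α) * theta3 (Real.pi * t) (2 * (α + 1 / α)) := by
  rw [mul_comm (theta3 _ (2 * α)),
    theta3_mul_theta3 (by positivity : 0 < 2 * (α + 1 / α)) (by positivity : 0 < 2 * α)]
  refine tsum_congr fun m => ?_
  congr 2
  · rw [show 4 * α + 2 / α = 2 * (α + 1 / α) + 2 * α by ring]
    push_cast
    rfl
  · ring
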